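/- arXiv:1412.7172 — 8 statements merged into one kernel-verified Lean document; each statement's English description precedes it below -/
import Mathlib

section
/- For 1/2 < p < 1, let q = 1-p, t* = D_KL(1/2 || p) / log(p/q), p* = (1+t*)/2 and q* = 1-p*. Then D_KL(q* || p) = D_KL(p* || p) + D_KL(1/2 || p), where D_KL(x || p) = x log(x/p) + (1-x) log((1-x)/(1-p)). -/
/-- Bernoulli Kullback-Leibler divergence `D_KL(x || p)`. -/
noncomputable def klBer (x p : ℝ) : ℝ :=
  x * Real.log (x / p) + (1 - x) * Real.log ((1 - x) / (1 - p))

lemma aux_log (x y : ℝ) (hy : y ≠ 0) :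
    x * Real.log (x / y) = x * (Real.log x - Real.log y) := by
  rcases eq_or_ne x 0 with h | h
  · simp [h]
  · rw [Real.log_div h hy]

theorem stmt0 (p t p' q' : ℝ) (hp : 1/2 < p) (hp1 : p < 1)
    (ht : t = klBer (1/2) p / Real.log (p / (1 - p)))
    (hps : p' = (1 + t) / 2) (hqs : q' = 1 - p') :
    klBer q' p = klBer p' p + klBer (1/2) p := by
  have hp0 : (0:ℝ) < p := by linarith
  have hq0 : (0:ℝ) < 1 - p := by linarith
  have hr1 : 1 < p / (1 - p) := (one_lt_div hq0).2 (by linarith)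
  have hlog : Real.log (p / (1 - p)) ≠ 0 := ne_of_gt (Real.log_pos hr1)
  have hlogdiv : Real.log (p / (1 - p)) = Real.log p - Real.log (1 - p) :=
    Real.log_div (ne_of_gt hp0) (ne_of_gt hq0)
  have key : klBer q' p = klBer p' p + (2 * p' - 1) * Real.log (p / (1 - p)) := by
    subst hqs
    simp only [klBer, aux_log _ p (ne_of_gt hp0), aux_log _ (1 - p) (ne_of_gt hq0),
      hlogdiv, sub_sub_cancel]
    ring
  have ht' : 2 * p' - 1 = t := by rw [hps]; ring
  rw [key, ht', ht, div_mul_cancel₀ _ hlog]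
end

section
/- For 1/2 < p < 1, there exists a unique real number t̂ ∈ (0, 2p-1) satisfying t̂ · log(p/(1-p)) = D_KL((1+t̂)/2 || p). -/
open Real Set

lemma sub_lt_mul_log_div {a b : ℝ} (ha : 0 < a) (hb : 0 < b) (hab : a ≠ b) :
    a - b < a * log (a / b) := by
  have hlog := log_lt_sub_one_of_pos (div_pos hb ha) (by
    rwa [ne_eq, div_eq_one_iff_eq ha.ne', eq_comm])
  have hscale : a * (b / a - 1) = b - a := by field_simp
  rw [← inv_div, log_inv]
  nlinarith [mul_lt_mul_of_pos_left hlog ha]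

lemma klBer_pos {x p : ℝ} (hx0 : 0 < x) (hx1 : x < 1) (hp0 : 0 < p) (hp1 : p < 1)
    (hxp : x ≠ p) : 0 < klBer x p := by
  have h₁ := sub_lt_mul_log_div hx0 hp0 hxp
  have h₂ := sub_lt_mul_log_div (sub_pos.2 hx1) (sub_pos.2 hp1) (by
    rwa [ne_eq, sub_right_inj])
  unfold klBer
  linarith

lemma klBer_self (p : ℝ) : klBer p p = 0 := by
  simp [klBer]

lemma klBer_eq_neg_binEntropy {p : ℝ} (hp0 : p ≠ 0) (hp1 : p ≠ 1) (x : ℝ) :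
    klBer x p = -binEntropy x - (x * log p + (1 - x) * log (1 - p)) := by
  have hmul_log_div : ∀ a b : ℝ, b ≠ 0 → a * log (a / b) = a * log a - a * log b := by
    intro a b hb
    rcases eq_or_ne a 0 with rfl | ha
    · simp
    · rw [log_div ha hb]; ring
  rw [klBer, binEntropy, log_inv, log_inv, hmul_log_div x p hp0,
    hmul_log_div (1 - x) (1 - p) (sub_ne_zero.2 hp1.symm)]
  ring

lemma hasDerivAt_klBer {x p : ℝ} (hx0 : x ≠ 0) (hx1 : x ≠ 1) (hp0 : p ≠ 0) (hp1 : p ≠ 1) :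
    HasDerivAt (klBer · p) (log (x / (1 - x)) - log (p / (1 - p))) x := by
  have hlin : HasDerivAt (fun y : ℝ => y * log p + (1 - y) * log (1 - p))
      (log p - log (1 - p)) x := by
    exact (((hasDerivAt_id x).mul_const (log p)).fun_add
      (((hasDerivAt_id x).const_sub 1).mul_const (log (1 - p)))).congr_deriv (by ring)
  simp_rw [klBer_eq_neg_binEntropy hp0 hp1]
  refine ((hasDerivAt_binEntropy hx0 hx1).fun_neg.fun_sub hlin).congr_deriv ?_
  rw [log_div hx0 (sub_ne_zero.2 hx1.symm), log_div hp0 (sub_ne_zero.2 hp1.symm)]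
  ring

lemma existsUnique_mem_Ioo_eq_zero_of_strictMonoOn {f : ℝ → ℝ} {a b : ℝ} (hab : a ≤ b)
    (hf : ContinuousOn f (Icc a b)) (hmono : StrictMonoOn f (Icc a b)) (ha : f a < 0)
    (hb : 0 < f b) : ∃! t, t ∈ Ioo a b ∧ f t = 0 := by
  obtain ⟨t, ht, hft⟩ := intermediate_value_Ioo hab hf ⟨ha, hb⟩
  refine ⟨t, ⟨ht, hft⟩, fun s ⟨hs, hfs⟩ => ?_⟩
  exact hmono.injOn (Ioo_subset_Icc_self hs) (Ioo_subset_Icc_self ht) (hfs.trans hft.symm)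

section

variable {p : ℝ}

lemma log_div_one_sub_pos (hp : 1 / 2 < p) (hp1 : p < 1) : 0 < log (p / (1 - p)) :=
  log_pos <| (one_lt_div (by linarith)).2 (by linarith)

noncomputable def klGap (p t : ℝ) : ℝ :=
  t * log (p / (1 - p)) - klBer ((1 + t) / 2) p

lemma hasDerivAt_klGap {t : ℝ} (ht0 : -1 < t) (ht1 : t < 1) (hp0 : 0 < p) (hp1 : p < 1) :
    HasDerivAt (klGap p) (log (p / (1 - p)) -
      (log ((1 + t) / 2 / (1 - (1 + t) / 2)) - log (p / (1 - p))) / 2) t := by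
  have hkl := hasDerivAt_klBer (x := (1 + t) / 2) (by linarith) (by linarith) hp0.ne' hp1.ne
  refine (((hasDerivAt_id t).mul_const _).fun_sub
    (hkl.comp t (((hasDerivAt_id t).const_add 1).div_const 2))).congr_deriv ?_
  ring

lemma continuousOn_klGap (hp0 : 0 < p) (hp1 : p < 1) :
    ContinuousOn (klGap p) (Icc 0 (2 * p - 1)) :=
  fun t ht => (hasDerivAt_klGap (by linarith [ht.1]) (by linarith [ht.2]) hp0 hp1)
    |>.continuousAt.continuousWithinAt

lemma strictMonoOn_klGap (hp : 1 / 2 < p) (hp1 : p < 1) :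
    StrictMonoOn (klGap p) (Icc 0 (2 * p - 1)) := by
  have hp0 : 0 < p := by linarith
  refine strictMonoOn_of_deriv_pos (convex_Icc _ _) (continuousOn_klGap hp0 hp1) fun t ht => ?_
  rw [interior_Icc] at ht
  rw [(hasDerivAt_klGap (by linarith [ht.1]) (by linarith [ht.2]) hp0 hp1).deriv]
  have hodds : log ((1 + t) / 2 / (1 - (1 + t) / 2)) ≤ log (p / (1 - p)) :=
    log_le_log (div_pos (by linarith [ht.1]) (by linarith [ht.2]))
      (div_le_div₀ hp0.le (by linarith [ht.2]) (by linarith) (by linarith [ht.2]))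
  linarith [log_div_one_sub_pos hp hp1]

lemma klGap_zero_neg (hp0 : 0 < p) (hp1 : p < 1) (hp : p ≠ 1 / 2) : klGap p 0 < 0 := by
  have := klBer_pos (x := 1 / 2) (by norm_num) (by norm_num) hp0 hp1 (Ne.symm hp)
  simpa [klGap] using this

lemma klGap_pos (hp : 1 / 2 < p) (hp1 : p < 1) : 0 < klGap p (2 * p - 1) := by
  have hmid : (1 + (2 * p - 1)) / 2 = p := by ring
  rw [klGap, hmid, klBer_self, sub_zero]
  exact mul_pos (by linarith) (log_div_one_sub_pos hp hp1)

end

theorem stmt2 (p : ℝ) (hp : 1/2 < p) (hp1 : p < 1) :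
    ∃! t : ℝ, t ∈ Set.Ioo 0 (2*p - 1) ∧
      t * Real.log (p / (1 - p)) = klBer ((1 + t)/2) p := by
  have hp0 : 0 < p := by linarith
  have := existsUnique_mem_Ioo_eq_zero_of_strictMonoOn (by linarith) (continuousOn_klGap hp0 hp1)
    (strictMonoOn_klGap hp hp1) (klGap_zero_neg hp0 hp1 hp.ne') (klGap_pos hp hp1)
  simpa only [klGap, sub_eq_zero] using this
end

section
/- For 1/2 < p < 1, let t* = D_KL(1/2 || p)/log(p/(1-p)) and let t̂ ∈ (0, 2p-1) satisfy t̂ · log(p/(1-p)) = D_KL((1+t̂)/2 || p). Then t̂ < t*. Consequently, with p* = (1+t*)/2, p̂ = (1+t̂)/2, q* = 1-p*, q̂ = 1-p̂, one has q* < q̂ and hence D_KL(q̂ || p) < D_KL(q* || p). -/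
lemma klBer_anti {p a b : ℝ} (hp : 1/2 < p) (hp1 : p < 1)
    (ha : 0 ≤ a) (hab : a < b) (hb : b ≤ p) : klBer b p < klBer a p := by
  have hp0 : (0:ℝ) < p := by linarith
  have h1p : (0:ℝ) < 1 - p := by linarith
  set g : ℝ → ℝ := fun x =>
    x * Real.log x + (1 - x) * Real.log (1 - x) - x * Real.log p
      - (1 - x) * Real.log (1 - p) with hg
  have hge : ∀ x ∈ Set.Icc (0:ℝ) p, klBer x p = g x := by
    intro x hx
    rcases eq_or_lt_of_le hx.1 with h0 | h0
    · simp only [hg, ← h0, klBer]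
      simp [Real.log_div one_ne_zero (by linarith : (1:ℝ) - p ≠ 0)]
    · have hx1 : (1:ℝ) - x ≠ 0 := by have := hx.2; intro h; nlinarith
      simp only [hg, klBer, Real.log_div (ne_of_gt h0) (ne_of_gt hp0),
        Real.log_div hx1 (ne_of_gt h1p)]
      ring
  have hcont : Continuous g := by
    have h1 : Continuous fun x : ℝ => x * Real.log x := Real.continuous_mul_log
    have h2 : Continuous fun x : ℝ => (1 - x) * Real.log (1 - x) :=
      h1.comp (continuous_const.sub continuous_id)
    fun_prop
  have hanti : StrictAntiOn g (Set.Icc (0:ℝ) p) := by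
    apply strictAntiOn_of_deriv_neg (convex_Icc _ _) hcont.continuousOn
    intro x hx
    rw [interior_Icc] at hx
    have hx0 : (0:ℝ) < x := hx.1
    have hxp : x < p := hx.2
    have hx1 : (0:ℝ) < 1 - x := by linarith
    have hd : HasDerivAt g
        ((Real.log x + 1) + (Real.log (1 - x) + 1) * (-1) - Real.log p
          - (-1) * Real.log (1 - p)) x := by
      have h1 : HasDerivAt (fun x : ℝ => x * Real.log x) (Real.log x + 1) x :=
        Real.hasDerivAt_mul_log hx0.ne'
      have hsub : HasDerivAt (fun x : ℝ => 1 - x) (-1) x := by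
        simpa using (hasDerivAt_id x).const_sub 1
      have h2 : HasDerivAt (fun x : ℝ => (1 - x) * Real.log (1 - x))
          ((Real.log (1 - x) + 1) * (-1)) x :=
        (Real.hasDerivAt_mul_log hx1.ne').comp x hsub
      have h3 : HasDerivAt (fun x : ℝ => x * Real.log p) (Real.log p) x := by
        simpa using (hasDerivAt_id x).mul_const (Real.log p)
      have h4 : HasDerivAt (fun x : ℝ => (1 - x) * Real.log (1 - p))
          ((-1) * Real.log (1 - p)) x := hsub.mul_const _
      exact ((h1.add h2).sub h3).sub h4
    rw [hd.deriv]
    have hl1 : Real.log x < Real.log p := Real.log_lt_log hx0 hxp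
    have hl2 : Real.log (1 - p) < Real.log (1 - x) := Real.log_lt_log h1p (by linarith)
    nlinarith
  have hbm : b ∈ Set.Icc (0:ℝ) p := ⟨by linarith, hb⟩
  have ham : a ∈ Set.Icc (0:ℝ) p := ⟨ha, by linarith⟩
  rw [hge a ham, hge b hbm]
  exact hanti ham hbm hab

theorem stmt4 (p ts th ps ph qs qh : ℝ) (hp : 1/2 < p) (hp1 : p < 1)
    (hts : ts = klBer (1/2) p / Real.log (p / (1 - p)))
    (hth : th ∈ Set.Ioo 0 (2*p - 1))
    (htheq : th * Real.log (p / (1 - p)) = klBer ((1 + th)/2) p)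
    (hps : ps = (1 + ts)/2) (hph : ph = (1 + th)/2)
    (hqs : qs = 1 - ps) (hqh : qh = 1 - ph) :
    th < ts ∧ qs < qh ∧ klBer qh p < klBer qs p := by
  obtain ⟨hth0, hth1⟩ := hth
  have hp0 : (0:ℝ) < p := by linarith
  have h1p : (0:ℝ) < 1 - p := by linarith
  have hL : 0 < Real.log (p / (1 - p)) := by
    apply Real.log_pos
    rw [lt_div_iff₀ h1p]; linarith
  set L := Real.log (p / (1 - p)) with hLdef
  -- step 1 : th < ts
  have hkey : klBer ((1 + th)/2) p < klBer (1/2) p :=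
    klBer_anti hp hp1 (by norm_num) (by linarith) (by linarith)
  have htsL : ts * L = klBer (1/2) p := by
    rw [hts]; field_simp
  have h1 : th < ts := by
    have : th * L < ts * L := by rw [htsL]; linarith [htheq]
    exact lt_of_mul_lt_mul_right this hL.le
  -- step 2 : ts < 1, hence qs > 0
  have hts1 : ts < 1 := by
    have hpoly : (1:ℝ) < 4 * p ^ 3 / (1 - p) := by
      rw [lt_div_iff₀ h1p]; nlinarith [sq_nonneg p, sq_nonneg (2*p - 1)]
    have hlogpos : 0 < Real.log (4 * p ^ 3 / (1 - p)) := Real.log_pos hpoly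
    have hexp : Real.log (4 * p ^ 3 / (1 - p)) =
        2 * Real.log 2 + 3 * Real.log p - Real.log (1 - p) := by
      rw [Real.log_div (by positivity) h1p.ne',
        Real.log_mul (by norm_num) (by positivity), Real.log_pow]
      have : Real.log 4 = 2 * Real.log 2 := by
        rw [show (4:ℝ) = 2 ^ 2 by norm_num, Real.log_pow]; push_cast; ring
      rw [this]; ring
    have hhalf : klBer (1/2) p =
        -Real.log 2 - (Real.log p + Real.log (1 - p)) / 2 := by
      unfold klBer
      rw [Real.log_div (by norm_num) hp0.ne', Real.log_div (by norm_num) h1p.ne']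
      have : Real.log (1/2) = -Real.log 2 := by
        rw [one_div, Real.log_inv]
      rw [show (1:ℝ) - 1/2 = 1/2 by norm_num, this]; ring
    have hLval : L = Real.log p - Real.log (1 - p) := Real.log_div hp0.ne' h1p.ne'
    have hlt : klBer (1/2) p < L := by
      rw [hhalf, hLval]
      nlinarith [hlogpos, hexp]
    rw [hts, div_lt_one hL]; exact hlt
  -- step 3
  have h2 : qs < qh := by rw [hqs, hqh, hps, hph]; linarith
  refine ⟨h1, h2, ?_⟩
  apply klBer_anti hp hp1
  · rw [hqs, hps]; linarith
  · exact h2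
  · rw [hqh, hph]; linarith
end

section
/- For 1/2 < p < 1, let b_p = D_KL(q* || p) where t* = D_KL(1/2 || p)/log(p/(1-p)), p* = (1+t*)/2, q* = 1-p*, and let a_p = D_KL(1/2 || p). Then 3/2 · a_p ≤ b_p ≤ 25/16 · a_p. -/
open Real Set

lemma apply_le_apply_of_hasDerivAt_nonneg {f f' : ℝ → ℝ} {a b : ℝ} (hab : a ≤ b)
    (hf : ∀ y ∈ Icc a b, HasDerivAt f (f' y) y) (hf' : ∀ y ∈ Ioo a b, 0 ≤ f' y) :
    f a ≤ f b :=
  monotoneOn_of_hasDerivWithinAt_nonneg (convex_Icc a b)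
    (fun y hy ↦ (hf y hy).continuousAt.continuousWithinAt)
    (fun y hy ↦ (hf y (interior_subset hy)).hasDerivWithinAt)
    (by rwa [interior_Icc]) (left_mem_Icc.2 hab) (right_mem_Icc.2 hab) hab

lemma log_one_add_le_cubic {t : ℝ} (ht : 0 ≤ t) :
    log (1 + t) ≤ t - t ^ 2 / 2 + t ^ 3 / 3 := by
  have key := apply_le_apply_of_hasDerivAt_nonneg
    (f := fun y ↦ y - y ^ 2 / 2 + y ^ 3 / 3 - log (1 + y))
    (f' := fun y ↦ y ^ 3 / (1 + y)) ht
    (fun y hy ↦ by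
      have hy : 0 < 1 + y := by linarith [hy.1]
      exact ((((hasDerivAt_id' y).fun_sub ((hasDerivAt_pow 2 y).div_const 2)).fun_add
        ((hasDerivAt_pow 3 y).div_const 3)).fun_sub
        (((hasDerivAt_id' y).const_add 1).log hy.ne')).congr_deriv (by field_simp; ring))
    (fun y hy ↦ div_nonneg (pow_nonneg hy.1.le 3) (by linarith [hy.1]))
  simpa using key

lemma log_one_sub_le_neg_cubic {t : ℝ} (ht0 : 0 ≤ t) (ht1 : t < 1) :
    log (1 - t) ≤ -(t + t ^ 2 / 2 + t ^ 3 / 3) := by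
  have key := apply_le_apply_of_hasDerivAt_nonneg
    (f := fun y ↦ -(y + y ^ 2 / 2 + y ^ 3 / 3) - log (1 - y))
    (f' := fun y ↦ y ^ 3 / (1 - y)) ht0
    (fun y hy ↦ by
      have hy : 0 < 1 - y := by linarith [hy.2]
      exact ((((hasDerivAt_id' y).fun_add ((hasDerivAt_pow 2 y).div_const 2)).fun_add
        ((hasDerivAt_pow 3 y).div_const 3)).fun_neg.fun_sub
        (((hasDerivAt_id' y).const_sub 1).log hy.ne')).congr_deriv (by field_simp; ring))
    (fun y hy ↦ div_nonneg (pow_nonneg hy.1.le 3) (by linarith [hy.2]))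
  simpa using key

lemma log_two_sub_binEntropy_le {t : ℝ} (ht0 : 0 ≤ t) (ht1 : t < 1) :
    log 2 - binEntropy ((1 - t) / 2) ≤ t ^ 2 / 2 + t ^ 4 / 3 := by
  have hm : 0 < 1 - t := by linarith
  have hp : 0 < 1 + t := by linarith
  have h : log 2 - binEntropy ((1 - t) / 2) =
      ((1 + t) * log (1 + t) + (1 - t) * log (1 - t)) / 2 := by
    rw [binEntropy, show 1 - (1 - t) / 2 = (1 + t) / 2 by ring, inv_div, inv_div,
      log_div two_ne_zero hm.ne', log_div two_ne_zero hp.ne']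
    ring
  rw [h]
  linear_combination (mul_le_mul_of_nonneg_left (log_one_add_le_cubic ht0) hp.le
    + mul_le_mul_of_nonneg_left (log_one_sub_le_neg_cubic ht0 ht1) hm.le) / 2

lemma mul_cosh_le_two_mul_sinh {y : ℝ} (h0 : 0 ≤ y) (h1 : y ≤ 6 / 5) :
    y * cosh y ≤ 2 * sinh y := by
  have hexp : 1 + 2 * y + (2 * y) ^ 2 / 2 ≤ exp y * exp y := by
    rw [← exp_add, ← two_mul]; exact quadratic_le_exp_of_nonneg (by linarith)
  have hkey : 2 + y ≤ (2 - y) * (exp y * exp y) := by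
    nlinarith [mul_le_mul_of_nonneg_left hexp (by linarith : (0 : ℝ) ≤ 2 - y)]
  have hinv : exp y * exp (-y) = 1 := by rw [← exp_add, add_neg_cancel, exp_zero]
  have hcancel : (2 - y) * (exp y * exp y) * exp (-y) = (2 - y) * exp y := by
    linear_combination ((2 - y) * exp y) * hinv
  rw [cosh_eq, sinh_eq]
  linarith [mul_le_mul_of_nonneg_right hkey (exp_pos (-y)).le]

lemma sinh_le_sub_cube_div_mul_cosh {y : ℝ} (h0 : 0 ≤ y) (h1 : y ≤ 6 / 5) :
    sinh y ≤ (y - y ^ 3 / 12) * cosh y := by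
  have key := apply_le_apply_of_hasDerivAt_nonneg
    (f := fun z ↦ (z - z ^ 3 / 12) * cosh z - sinh z)
    (f' := fun z ↦ (z - z ^ 3 / 12) * sinh z - z ^ 2 / 4 * cosh z) h0
    (fun z _ ↦ ((((hasDerivAt_id' z).fun_sub ((hasDerivAt_pow 3 z).div_const 12)).fun_mul
      (hasDerivAt_cosh z)).fun_sub (hasDerivAt_sinh z)).congr_deriv (by ring))
    (fun z hz ↦ by
      obtain ⟨hz0, hz1⟩ := hz
      have hsinh := mul_cosh_le_two_mul_sinh hz0.le (hz1.le.trans h1)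
      have hz2 : z ^ 2 ≤ 36 / 25 := by nlinarith
      have hpoly : 0 ≤ z - z ^ 3 / 12 := by nlinarith [mul_le_mul_of_nonneg_left hz2 hz0.le]
      have hquartic : 0 ≤ cosh z * (z ^ 2 / 4 - z ^ 4 / 24) :=
        mul_nonneg (cosh_pos z).le (by nlinarith [mul_le_mul_of_nonneg_left hz2 (sq_nonneg z)])
      nlinarith [mul_le_mul_of_nonneg_left hsinh hpoly])
  simpa using key

lemma tanh_le_sub_cube_div {y : ℝ} (h0 : 0 ≤ y) (h1 : y ≤ 7 / 3) :
    tanh y ≤ y - y ^ 3 / 12 := by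
  rcases le_or_gt y (6 / 5) with hy | hy
  · rw [tanh_eq_sinh_div_cosh, div_le_iff₀ (cosh_pos y)]
    exact sinh_le_sub_cube_div_mul_cosh h0 hy
  · have : 1 ≤ y - y ^ 3 / 12 := by
      nlinarith [mul_nonneg (mul_nonneg (sub_nonneg.2 hy.le) (sub_nonneg.2 h1)) h0]
    linarith [tanh_lt_one y]

lemma log_cosh_le_quartic {x : ℝ} (h0 : 0 ≤ x) (h1 : x ≤ 7 / 3) :
    log (cosh x) ≤ x ^ 2 / 2 - x ^ 4 / 48 := by
  have key := apply_le_apply_of_hasDerivAt_nonneg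
    (f := fun y ↦ y ^ 2 / 2 - y ^ 4 / 48 - log (cosh y))
    (f' := fun y ↦ y - y ^ 3 / 12 - tanh y) h0
    (fun y _ ↦ ((((hasDerivAt_pow 2 y).div_const 2).fun_sub
      ((hasDerivAt_pow 4 y).div_const 48)).fun_sub
      ((hasDerivAt_cosh y).log (cosh_pos y).ne')).congr_deriv
      (by rw [tanh_eq_sinh_div_cosh]; ring))
    (fun y hy ↦ sub_nonneg.2 (tanh_le_sub_cube_div hy.1.le (hy.2.le.trans h1)))
  simpa using key

lemma log_cosh_le_self {x : ℝ} (hx : 0 ≤ x) : log (cosh x) ≤ x := by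
  rw [log_le_iff_le_exp (cosh_pos x), cosh_eq]
  linarith [exp_le_exp.2 (by linarith : -x ≤ x)]

lemma log_cosh_nonneg (x : ℝ) : 0 ≤ log (cosh x) :=
  log_nonneg (one_le_cosh x)

lemma two_mul_sq_mul_log_cosh_add_le {x : ℝ} (hx : 0 ≤ x) :
    2 * x ^ 2 * log (cosh x) + log (cosh x) ^ 3 / 3 ≤ x ^ 4 := by
  have hc0 := log_cosh_nonneg x
  rcases le_or_gt x (7 / 3) with hx1 | hx1
  · have hc := log_cosh_le_quartic hx hx1
    have hc3 : log (cosh x) ^ 3 ≤ (x ^ 2 / 2 - x ^ 4 / 48) ^ 3 := pow_le_pow_left₀ hc0 hc 3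
    have hgap : x ^ 4 - (2 * x ^ 2 * (x ^ 2 / 2 - x ^ 4 / 48) + (x ^ 2 / 2 - x ^ 4 / 48) ^ 3 / 3)
        = x ^ 8 * ((x ^ 2 - 36) ^ 2 + 432) / 331776 := by ring
    nlinarith [mul_le_mul_of_nonneg_left hc (by positivity : (0 : ℝ) ≤ 2 * x ^ 2),
      (by positivity : (0 : ℝ) ≤ x ^ 8 * ((x ^ 2 - 36) ^ 2 + 432) / 331776)]
  · have hc := log_cosh_le_self hx
    have hc3 : log (cosh x) ^ 3 ≤ x ^ 3 := pow_le_pow_left₀ hc0 hc 3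
    nlinarith [mul_le_mul_of_nonneg_left hc (by positivity : (0 : ℝ) ≤ 2 * x ^ 2),
      mul_le_mul_of_nonneg_left hx1.le (by positivity : (0 : ℝ) ≤ x ^ 3)]

lemma klBer_eq_neg_binEntropy_sub {q p : ℝ} (hq0 : 0 < q) (hq1 : q < 1) (hp0 : 0 < p)
    (hp1 : p < 1) : klBer q p = -binEntropy q - q * log p - (1 - q) * log (1 - p) := by
  rw [klBer, binEntropy, log_div hq0.ne' hp0.ne', log_div (by linarith) (by linarith),
    log_inv, log_inv]
  ring

lemma klBer_half_eq_log_cosh {p : ℝ} (hp0 : 0 < p) (hp1 : p < 1) :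
    klBer (1 / 2) p = log (cosh (log (p / (1 - p)) / 2)) := by
  have hq : 0 < 1 - p := by linarith
  have hcosh : cosh (log (p / (1 - p)) / 2) = exp (-(log p + log (1 - p)) / 2) / 2 := by
    have hplus : exp (log (p / (1 - p)) / 2) =
        exp (-(log p + log (1 - p)) / 2) * exp (log p) := by
      rw [← exp_add, log_div hp0.ne' hq.ne']; ring_nf
    have hminus : exp (-(log (p / (1 - p)) / 2)) =
        exp (-(log p + log (1 - p)) / 2) * exp (log (1 - p)) := by
      rw [← exp_add, log_div hp0.ne' hq.ne']; ring_nf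
    rw [cosh_eq, hplus, hminus, exp_log hp0, exp_log hq]
    ring
  rw [klBer_eq_neg_binEntropy_sub (by norm_num) (by norm_num) hp0 hp1, hcosh,
    log_div (exp_pos _).ne' two_ne_zero, log_exp, one_div, binEntropy_two_inv]
  ring

lemma klBer_one_sub_div_two {p t : ℝ} (hp0 : 0 < p) (hp1 : p < 1) (ht : |t| < 1) :
    klBer ((1 - t) / 2) p =
      klBer (1 / 2) p + (log 2 - binEntropy ((1 - t) / 2)) + t / 2 * log (p / (1 - p)) := by
  obtain ⟨ht0, ht1⟩ := abs_lt.1 ht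
  rw [klBer_eq_neg_binEntropy_sub (by linarith) (by linarith) hp0 hp1,
    klBer_eq_neg_binEntropy_sub (by norm_num) (by norm_num) hp0 hp1, one_div,
    binEntropy_two_inv, log_div hp0.ne' (by linarith)]
  ring

lemma log_cosh_div_two_mul_mem_Icc {x : ℝ} (hx : 0 < x) :
    log (cosh x) / (2 * x) ∈ Icc 0 (1 / 2) := by
  refine ⟨div_nonneg (log_cosh_nonneg x) (by positivity), ?_⟩
  rw [div_le_iff₀ (by positivity)]
  linarith [log_cosh_le_self hx.le]

lemma log_two_sub_binEntropy_le_log_cosh_div {x : ℝ} (hx : 0 < x) :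
    log 2 - binEntropy ((1 - log (cosh x) / (2 * x)) / 2) ≤ log (cosh x) / 16 := by
  obtain ⟨ht0, ht1⟩ := log_cosh_div_two_mul_mem_Icc hx
  refine (log_two_sub_binEntropy_le ht0 (by linarith)).trans ?_
  have hkey := two_mul_sq_mul_log_cosh_add_le hx.le
  have hc := log_cosh_nonneg x
  set c := log (cosh x)
  have hgap : (c / (2 * x)) ^ 2 / 2 + (c / (2 * x)) ^ 4 / 3 - c / 16 =
      c * (6 * x ^ 2 * c + c ^ 3 - 3 * x ^ 4) / (48 * x ^ 4) := by
    field_simp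
    ring
  have : c * (6 * x ^ 2 * c + c ^ 3 - 3 * x ^ 4) / (48 * x ^ 4) ≤ 0 :=
    div_nonpos_of_nonpos_of_nonneg (mul_nonpos_of_nonneg_of_nonpos hc (by linarith))
      (by positivity)
  linarith

theorem stmt5 (p a b ts ps qs : ℝ) (hp : 1/2 < p) (hp1 : p < 1)
    (ha : a = klBer (1/2) p)
    (hts : ts = a / Real.log (p / (1 - p)))
    (hps : ps = (1 + ts)/2) (hqs : qs = 1 - ps)
    (hb : b = klBer qs p) :
    3/2 * a ≤ b ∧ b ≤ 25/16 * a := by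
  have hp0 : 0 < p := by linarith
  set x := log (p / (1 - p)) / 2 with hx
  have hx0 : 0 < x := by
    have : 1 < p / (1 - p) := by rw [one_lt_div (by linarith)]; linarith
    linarith [log_pos this]
  have ha' : a = log (cosh x) := ha.trans (klBer_half_eq_log_cosh hp0 hp1)
  have hts' : ts = log (cosh x) / (2 * x) := by rw [hts, ha', hx]; ring_nf
  obtain ⟨ht0, ht1⟩ := hts' ▸ log_cosh_div_two_mul_mem_Icc hx0
  have hL : ts * log (p / (1 - p)) = a := by
    rw [hts]; exact div_mul_cancel₀ _ (by linarith)
  have hb' : b = 3 / 2 * a + (log 2 - binEntropy ((1 - ts) / 2)) := by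
    rw [hb, hqs, hps, show 1 - (1 + ts) / 2 = (1 - ts) / 2 by ring,
      klBer_one_sub_div_two hp0 hp1 (abs_lt.2 ⟨by linarith, by linarith⟩), ← ha]
    linear_combination hL / 2
  have hE := log_two_sub_binEntropy_le_log_cosh_div hx0
  rw [← hts', ← ha'] at hE
  constructor
  · linarith [binEntropy_le_log_two (p := (1 - ts) / 2)]
  · linarith
end

section
/- Let X_1, X_2, ... be i.i.d. random variables taking value +1 with probability p ∈ (1/2, 1) and -1 with probability 1-p, and let S_n = X_1 + ... + X_n. Then lim_{n→∞} -(1/n) log P[S_n ≤ 0] = D_KL(1/2 || p). -/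
open MeasureTheory ProbabilityTheory Filter

/-!
Writing `q = 1 - p` and `s = √(p q)`, independence gives
`P[S_n ≤ 0] = ∑_{2k ≤ n} C(n,k) p^k q^(n-k)`. Since `q ≤ s` each path probability with
`2k ≤ n` is at most `s^n`, and the path with `⌊n/2⌋` up-steps has probability at least `q s^n`;
together with `2^n / (n+1) ≤ C(n, ⌊n/2⌋) ≤ 2^n` this squeezes the probability between
`q (2s)^n / (n+1)` and `(2s)^n`. Hence the rate is `-log (2s) = D_KL(1/2 || p)`.
-/

open Finset Real Topology

section HitTimes

variable {Ω β : Type*} [DecidableEq β] {X : ℕ → Ω → β} {b : β}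
  {n : ℕ} {A : Finset ℕ}

def hitTimes (X : ℕ → Ω → β) (b : β) (n : ℕ) (ω : Ω) : Finset ℕ := {i ∈ range n | X i ω = b}

lemma setOf_hitTimes_eq (hA : A ⊆ range n) :
    {ω | hitTimes X b n ω = A} = ⋂ i ∈ range n, X i ⁻¹' (if i ∈ A then {b} else {b}ᶜ) := by
  ext ω
  simp only [Set.mem_ofPred_eq, Set.mem_iInter, Set.mem_preimage, hitTimes, Finset.ext_iff,
    mem_filter, mem_range]
  refine ⟨fun h i hi => ?_, fun h i => ?_⟩
  · split_ifs with hiA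
    exacts [((h i).2 hiA).2, fun hb => hiA ((h i).1 ⟨hi, hb⟩)]
  · by_cases hi : i < n
    · have := h i hi
      split_ifs at this with hiA <;> simp_all
    · exact iff_of_false (fun h' => hi h'.1) (fun hiA => hi (mem_range.1 (hA hiA)))

variable [MeasurableSpace Ω] [MeasurableSpace β] [MeasurableSingletonClass β]

lemma measurableSet_hitTimes_eq (hmeas : ∀ i, Measurable (X i)) (hA : A ⊆ range n) :
    MeasurableSet {ω | hitTimes X b n ω = A} := by
  rw [setOf_hitTimes_eq hA]
  refine .biInter (range n).countable_toSet fun i _ => hmeas i ?_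
  split_ifs
  exacts [measurableSet_singleton b, (measurableSet_singleton b).compl]

lemma measure_hitTimes_eq {μ : Measure Ω} [IsProbabilityMeasure μ] {p : ℝ} (hp : 0 ≤ p)
    (hmeas : ∀ i, Measurable (X i)) (hindep : iIndepFun X μ)
    (hdist : ∀ i, μ {ω | X i ω = b} = ENNReal.ofReal p) (hA : A ⊆ range n) :
    μ {ω | hitTimes X b n ω = A} = ENNReal.ofReal p ^ #A * ENNReal.ofReal (1 - p) ^ (n - #A) := by
  have hmiss : ∀ i, μ (X i ⁻¹' {b}ᶜ) = ENNReal.ofReal (1 - p) := by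
    intro i
    have hhit : μ (X i ⁻¹' {b}) = ENNReal.ofReal p := hdist i
    rw [Set.preimage_compl, measure_compl (hmeas i (measurableSet_singleton b)) (measure_ne_top _ _),
      measure_univ, hhit, ← ENNReal.ofReal_one, ← ENNReal.ofReal_sub 1 hp]
  have hfactor : ∀ i, μ (X i ⁻¹' (if i ∈ A then {b} else {b}ᶜ)) =
      if i ∈ A then ENNReal.ofReal p else ENNReal.ofReal (1 - p) := by
    intro i
    split_ifs
    exacts [hdist i, hmiss i]
  rw [setOf_hitTimes_eq hA, hindep.measure_inter_preimage_eq_mul _ fun i _ => by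
      split_ifs
      exacts [measurableSet_singleton b, (measurableSet_singleton b).compl],
    prod_congr rfl fun i _ => hfactor i, prod_ite, prod_const, prod_const,
    filter_mem_eq_inter, inter_eq_right.2 hA, filter_not, filter_mem_eq_inter,
    inter_eq_right.2 hA, card_sdiff_of_subset hA, card_range]

end HitTimes

section SignWalk

variable {Ω : Type*} {X : ℕ → Ω → ℤ}

lemma sum_range_eq_two_mul_card_hitTimes_sub (hval : ∀ i ω, X i ω = 1 ∨ X i ω = -1)
    (n : ℕ) (ω : Ω) : ∑ k ∈ range n, X k ω = 2 * #(hitTimes X 1 n ω) - n := by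
  have hstep : ∀ k, X k ω = 2 * (if X k ω = 1 then 1 else 0) - 1 := fun k => by
    rcases hval k ω with h | h <;> simp [h]
  rw [sum_congr rfl fun k _ => hstep k, sum_sub_distrib, ← mul_sum, sum_boole, hitTimes]
  simp

lemma toReal_measure_sum_range_nonpos [MeasurableSpace Ω] {μ : Measure Ω}
    [IsProbabilityMeasure μ] {p : ℝ} (hp0 : 0 ≤ p) (hp1 : p ≤ 1)
    (hmeas : ∀ i, Measurable (X i)) (hindep : iIndepFun X μ)
    (hval : ∀ i ω, X i ω = 1 ∨ X i ω = -1)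
    (hdist : ∀ i, μ {ω | X i ω = 1} = ENNReal.ofReal p) (n : ℕ) :
    (μ {ω | ∑ k ∈ range n, X k ω ≤ 0}).toReal =
      ∑ m ∈ range (n + 1) with 2 * m ≤ n, (n.choose m : ℝ) * (p ^ m * (1 - p) ^ (n - m)) := by
  set T := (range n).powerset.filter fun A => 2 * #A ≤ n
  have hset : {ω | ∑ k ∈ range n, X k ω ≤ 0} = hitTimes X 1 n ⁻¹' T := by
    ext ω
    simp only [Set.mem_ofPred_eq, Set.mem_preimage, coe_filter, mem_powerset, T,
      sum_range_eq_two_mul_card_hitTimes_sub hval, hitTimes, filter_subset, true_and]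
    omega
  have hsubset : ∀ A ∈ T, A ⊆ range n := fun A hA => mem_powerset.1 (mem_filter.1 hA).1
  rw [hset, ← sum_measure_preimage_singleton T fun A hA =>
      measurableSet_hitTimes_eq hmeas (hsubset A hA),
    ENNReal.toReal_sum fun _ _ => measure_ne_top _ _]
  have hatom : ∀ A ∈ T, (μ (hitTimes X 1 n ⁻¹' {A})).toReal = p ^ #A * (1 - p) ^ (n - #A) := by
    intro A hA
    change (μ {ω | hitTimes X 1 n ω = A}).toReal = _
    rw [measure_hitTimes_eq hp0 hmeas hindep hdist (hsubset A hA),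
      ENNReal.toReal_mul, ENNReal.toReal_pow, ENNReal.toReal_pow, ENNReal.toReal_ofReal hp0,
      ENNReal.toReal_ofReal (by linarith)]
  rw [sum_congr rfl hatom, sum_filter, sum_filter,
    sum_powerset_apply_card (fun m => if 2 * m ≤ n then p ^ m * (1 - p) ^ (n - m) else 0),
    card_range]
  simp [nsmul_eq_mul]

end SignWalk

section BinomialTail

variable {p : ℝ}

lemma pow_mul_one_sub_pow_eq_sqrt_pow (hp0 : 0 ≤ p) (hp1 : p ≤ 1) {k n : ℕ} (hk : 2 * k ≤ n) :
    p ^ k * (1 - p) ^ (n - k) = √(p * (1 - p)) ^ (2 * k) * (1 - p) ^ (n - 2 * k) := by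
  rw [pow_mul, sq_sqrt (by nlinarith), mul_pow, mul_assoc, ← pow_add]
  congr 2
  omega

lemma sum_choose_mul_pow_le (hp : 1 / 2 ≤ p) (hp1 : p ≤ 1) (n : ℕ) :
    ∑ m ∈ range (n + 1) with 2 * m ≤ n, (n.choose m : ℝ) * (p ^ m * (1 - p) ^ (n - m))
      ≤ (2 * √(p * (1 - p))) ^ n := by
  set s := √(p * (1 - p))
  have hqs : 1 - p ≤ s := le_sqrt_of_sq_le (by nlinarith)
  have hterm : ∀ m, 2 * m ≤ n → p ^ m * (1 - p) ^ (n - m) ≤ s ^ n := by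
    intro m hm
    rw [pow_mul_one_sub_pow_eq_sqrt_pow (by linarith) hp1 hm]
    calc s ^ (2 * m) * (1 - p) ^ (n - 2 * m) ≤ s ^ (2 * m) * s ^ (n - 2 * m) := by
          gcongr
      _ = s ^ n := by rw [← pow_add]; congr 1; omega
  calc _ ≤ ∑ m ∈ range (n + 1) with 2 * m ≤ n, (n.choose m : ℝ) * s ^ n := by
        gcongr with m hm
        exact hterm m (mem_filter.1 hm).2
    _ ≤ ∑ m ∈ range (n + 1), (n.choose m : ℝ) * s ^ n :=
        sum_le_sum_of_subset_of_nonneg (filter_subset _ _) fun _ _ _ => by positivity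
    _ = (2 * s) ^ n := by
        rw [← sum_mul, mul_pow, ← Nat.cast_sum, Nat.sum_range_choose]
        push_cast; ring

lemma two_pow_le_succ_mul_choose_half (n : ℕ) : 2 ^ n ≤ (n + 1) * n.choose (n / 2) :=
  calc 2 ^ n = ∑ i ∈ range (n + 1), n.choose i := (Nat.sum_range_choose n).symm
    _ ≤ ∑ _i ∈ range (n + 1), n.choose (n / 2) := sum_le_sum fun i _ => Nat.choose_le_middle i n
    _ = (n + 1) * n.choose (n / 2) := by simp

lemma le_sum_choose_mul_pow (hp : 1 / 2 ≤ p) (hp1 : p ≤ 1) (n : ℕ) :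
    (1 - p) / (n + 1) * (2 * √(p * (1 - p))) ^ n ≤
      ∑ m ∈ range (n + 1) with 2 * m ≤ n, (n.choose m : ℝ) * (p ^ m * (1 - p) ^ (n - m)) := by
  set s := √(p * (1 - p))
  have hq : 0 ≤ 1 - p := by linarith
  have hs1 : s ≤ 1 := sqrt_le_one.mpr (by nlinarith)
  have hhalf : 2 * (n / 2) ≤ n := Nat.mul_div_le n 2
  have hmiddle : (1 - p) * s ^ n ≤ p ^ (n / 2) * (1 - p) ^ (n - n / 2) := by
    have hq1 : (1 - p) ^ 1 ≤ (1 - p) ^ (n - 2 * (n / 2)) :=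
      pow_le_pow_of_le_one hq (by linarith) (by omega)
    rw [pow_mul_one_sub_pow_eq_sqrt_pow (by linarith) hp1 hhalf, mul_comm]
    calc s ^ n * (1 - p) ≤ s ^ (2 * (n / 2)) * (1 - p) ^ 1 := by
          rw [pow_one]
          exact mul_le_mul_of_nonneg_right (pow_le_pow_of_le_one (by positivity) hs1 hhalf)
            hq
      _ ≤ _ := by gcongr
  have hchoose : (2 : ℝ) ^ n ≤ (n + 1) * n.choose (n / 2) := by
    exact_mod_cast two_pow_le_succ_mul_choose_half n
  calc (1 - p) / (n + 1) * (2 * s) ^ n = 2 ^ n / (n + 1) * ((1 - p) * s ^ n) := by ring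
    _ ≤ n.choose (n / 2) * (p ^ (n / 2) * (1 - p) ^ (n - n / 2)) := by
        refine mul_le_mul ?_ hmiddle (by positivity) (by positivity)
        rw [div_le_iff₀ (by positivity)]
        linarith
    _ ≤ _ := single_le_sum (f := fun m => (n.choose m : ℝ) * (p ^ m * (1 - p) ^ (n - m)))
        (fun m _ => by positivity)
        (mem_filter.2 ⟨mem_range.2 (by omega), hhalf⟩)

end BinomialTail

lemma tendsto_log_add_one_div_atTop :
    Tendsto (fun n : ℕ => log (n + 1) / n) atTop (𝓝 0) := by
  have hlog : (fun n : ℕ => log ((n : ℝ) + 1)) =o[atTop] (fun n : ℕ => (n : ℝ) + 1) :=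
    isLittleO_log_id_atTop.comp_tendsto
      (tendsto_atTop_add_const_right _ 1 tendsto_natCast_atTop_atTop)
  have hlin : (fun n : ℕ => (n : ℝ) + 1) =O[atTop] (fun n : ℕ => (n : ℝ)) := by
    refine Asymptotics.IsBigO.of_bound 2 ?_
    filter_upwards [eventually_ge_atTop 1] with n hn
    have : (1 : ℝ) ≤ n := by exact_mod_cast hn
    rw [Real.norm_of_nonneg (by positivity), Real.norm_of_nonneg (by positivity)]
    linarith
  exact (hlog.trans_isBigO hlin).tendsto_div_nhds_zero

lemma klBer_half_eq_neg_log {p : ℝ} (hp0 : 0 < p) (hp1 : p < 1) :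
    klBer (1 / 2) p = -log (2 * √(p * (1 - p))) := by
  have hq : 0 < 1 - p := by linarith
  rw [klBer, log_mul two_ne_zero (by positivity), log_sqrt (by positivity),
    log_mul hp0.ne' hq.ne', log_div (by norm_num) hp0.ne', log_div (by norm_num) hq.ne',
    show (1 : ℝ) - 1 / 2 = 1 / 2 by norm_num, one_div, log_inv]
  ring

lemma tendsto_neg_inv_mul_log_of_bounds {P : ℕ → ℝ} {c r : ℝ} (hc : 0 < c) (hr : 0 < r)
    (hlo : ∀ n : ℕ, c / (n + 1) * r ^ n ≤ P n) (hhi : ∀ n, P n ≤ r ^ n) :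
    Tendsto (fun n : ℕ => -(1 / (n : ℝ)) * log (P n)) atTop (𝓝 (-log r)) := by
  have hP : ∀ n, 0 < P n := fun n => (by positivity : 0 < c / (n + 1) * r ^ n).trans_le (hlo n)
  have herr : Tendsto (fun n : ℕ => -log r + (log (n + 1) / n - log c / n)) atTop
      (𝓝 (-log r)) := by
    simpa using tendsto_const_nhds.add
      (tendsto_log_add_one_div_atTop.sub (tendsto_const_div_atTop_nhds_zero_nat (log c)))
  refine tendsto_of_tendsto_of_tendsto_of_le_of_le' tendsto_const_nhds herr ?_ ?_ <;>
    filter_upwards [eventually_gt_atTop 0] with n hn <;>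
    have hn' : (0 : ℝ) < n := by exact_mod_cast hn
  · have hupper := log_le_log (hP n) (hhi n)
    rw [log_pow] at hupper
    rw [neg_mul, neg_le_neg_iff, one_div_mul_eq_div, div_le_iff₀ hn']
    linarith
  · have hlower := log_le_log (by positivity) (hlo n)
    rw [log_mul (by positivity) (by positivity), log_div hc.ne' (by positivity), log_pow] at hlower
    rw [neg_mul, one_div_mul_eq_div, ← sub_div, ← neg_div, div_le_iff₀ hn', add_mul,
      div_mul_cancel₀ _ hn'.ne']
    linarith

theorem stmt6 {Ω : Type*} [MeasurableSpace Ω] (μ : Measure Ω) [IsProbabilityMeasure μ]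
    (p : ℝ) (hp : 1/2 < p) (hp1 : p < 1)
    (X : ℕ → Ω → ℤ) (hmeas : ∀ i, Measurable (X i))
    (hindep : iIndepFun X μ)
    (hval : ∀ i ω, X i ω = 1 ∨ X i ω = -1)
    (hdist : ∀ i, μ {ω | X i ω = 1} = ENNReal.ofReal p) :
    Tendsto (fun n : ℕ =>
        -(1/(n:ℝ)) * Real.log ((μ {ω | ∑ k ∈ Finset.range n, X k ω ≤ 0}).toReal))
      atTop (nhds (klBer (1/2) p)) := by
  have hq : 0 < 1 - p := by linarith
  have hrate : 0 < 2 * √(p * (1 - p)) := by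
    have : 0 < p * (1 - p) := mul_pos (by linarith) hq
    positivity
  rw [klBer_half_eq_neg_log (by linarith) hp1]
  refine tendsto_neg_inv_mul_log_of_bounds hq hrate (fun n => ?_) (fun n => ?_) <;>
    rw [toReal_measure_sum_range_nonpos (by linarith) hp1.le hmeas hindep hval hdist n]
  · exact le_sum_choose_mul_pow hp.le hp1.le n
  · exact sum_choose_mul_pow_le hp.le hp1.le n
end

section
/- Let S_n be a random walk with i.i.d. ±1 steps, P[step = 1] = p. For every n ≥ 1, P[S_k < 0 for all 1 ≤ k ≤ n] ≥ (1/n) · P[S_n < 0]. -/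
/-!
Cycle lemma plus exchangeability. If a path of `n` steps ends below `0`, then rotating it
cyclically so that it starts just after the last maximum of its partial sums gives a path all
of whose partial sums are negative. For i.i.d. steps the `n` rotations of `(X_0, …, X_{n-1})`
all have the same law, so the `n` events "the `r`-th rotation stays negative" each have
probability `P[S_k < 0 for 1 ≤ k ≤ n]`, and they cover `{S_n < 0}`. A union bound concludes.
-/

open MeasureTheory ProbabilityTheory Finset Fin.NatCast

section CycleLemma

variable {α : Type*}

lemma exists_lt_forall_le_and_forall_gt_lt [LinearOrder α] (G : ℕ → α) {n : ℕ} (hn : 0 < n) :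
    ∃ r < n, (∀ j < n, G j ≤ G r) ∧ ∀ j, r < j → j < n → G j < G r := by
  classical
  set S := (range n).filter fun j => ∀ i < n, G i ≤ G j
  have hS : S.Nonempty := by
    obtain ⟨m, hm, hmax⟩ := (range n).exists_max_image G ⟨0, mem_range.2 hn⟩
    exact ⟨m, mem_filter.2 ⟨hm, fun i hi => hmax i (mem_range.2 hi)⟩⟩
  obtain ⟨hr, hrmax⟩ := mem_filter.1 (S.max'_mem hS)
  refine ⟨S.max' hS, mem_range.1 hr, hrmax, fun j hrj hjn => lt_of_not_ge fun hle => ?_⟩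
  have hjS : j ∈ S := mem_filter.2 ⟨mem_range.2 hjn, fun i hi => (hrmax i hi).trans hle⟩
  exact (S.le_max' j hjS).not_gt hrj

variable [AddCommGroup α] [LinearOrder α] [IsOrderedAddMonoid α]

/-- The indices `i < k` are read in `Fin n` modulo `n`. -/
def PrefixSumsNeg {n : ℕ} [NeZero n] (v : Fin n → α) : Prop :=
  ∀ k, 1 ≤ k → k ≤ n → ∑ i ∈ range k, v i < 0

theorem exists_prefixSumsNeg_rotation_of_sum_neg {n : ℕ} [NeZero n] {v : Fin n → α}
    (hv : ∑ i, v i < 0) : ∃ r : Fin n, PrefixSumsNeg fun i => v (r + i) := by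
  set G : ℕ → α := fun m => ∑ i ∈ range m, v (i : Fin n)
  have hG_add : ∀ a b : ℕ, G (a + b) = G a + ∑ i ∈ range b, v ((a : Fin n) + (i : Fin n)) :=
    fun a b => by simp only [G, sum_range_add, Nat.cast_add]
  have hG_period : ∀ j, G (n + j) = G n + G j := fun j => by
    rw [hG_add, Fin.natCast_self]
    simp only [zero_add, G]
  have hGn : G n < 0 := by
    show ∑ i ∈ range n, v (i : Fin n) < 0
    rw [← Fin.sum_univ_eq_sum_range (fun i => v (i : Fin n)) n]
    simpa only [Fin.cast_val_eq_self] using hv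
  obtain ⟨r, hr, hmax, hlast⟩ := exists_lt_forall_le_and_forall_gt_lt G (Nat.pos_of_neZero n)
  refine ⟨(r : Fin n), fun k hk1 hkn => ?_⟩
  have hdrop : G (r + k) < G r := by
    rcases lt_or_ge (r + k) n with h | h
    · exact hlast _ (by omega) h
    · obtain ⟨j, hj⟩ := Nat.exists_eq_add_of_le h
      calc G (r + k) = G n + G j := by rw [hj, hG_period]
        _ ≤ G n + G r := by gcongr; exact hmax j (by omega)
        _ < G r := add_lt_of_neg_left _ hGn
  rw [hG_add] at hdrop
  exact (add_lt_iff_neg_left).1 hdrop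

end CycleLemma

section IdenticallyDistributed

variable {Ω : Type*} [MeasurableSpace Ω] {μ : Measure Ω}

theorem map_eq_map_of_forall_eq_one_or_neg_one [IsFiniteMeasure μ] {X Y : Ω → ℤ}
    (hX : Measurable X) (hY : Measurable Y) (hXval : ∀ ω, X ω = 1 ∨ X ω = -1)
    (hYval : ∀ ω, Y ω = 1 ∨ Y ω = -1) (h : μ {ω | X ω = 1} = μ {ω | Y ω = 1}) :
    μ.map X = μ.map Y := by
  have hneg : ∀ Z : Ω → ℤ, (∀ ω, Z ω = 1 ∨ Z ω = -1) → Z ⁻¹' {-1} = {ω | Z ω = 1}ᶜ :=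
    fun Z hZ => by ext ω; rcases hZ ω with h | h <;> simp [h]
  refine Measure.ext_of_singleton fun z => ?_
  rw [Measure.map_apply hX (measurableSet_singleton z),
    Measure.map_apply hY (measurableSet_singleton z)]
  by_cases h1 : z = 1
  · subst h1; exact h
  by_cases h2 : z = -1
  · subst h2
    rw [hneg X hXval, hneg Y hYval, measure_compl (measurableSet_eq_fun hX measurable_const)
      (measure_ne_top _ _), measure_compl (measurableSet_eq_fun hY measurable_const)
      (measure_ne_top _ _), h]
  · have hempty : ∀ Z : Ω → ℤ, (∀ ω, Z ω = 1 ∨ Z ω = -1) → Z ⁻¹' {z} = ∅ :=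
      fun Z hZ => by ext ω; rcases hZ ω with h | h <;> simp [h, Ne.symm h1, Ne.symm h2]
    rw [hempty X hXval, hempty Y hYval]

theorem ProbabilityTheory.iIndepFun.map_fun_comp_eq_pi {ι ι' β : Type*} [Fintype ι]
    [MeasurableSpace β] [IsProbabilityMeasure μ] {X : ι' → Ω → β} (hindep : iIndepFun X μ)
    (hmeas : ∀ i, Measurable (X i)) {ν : Measure β} (hν : ∀ i, μ.map (X i) = ν) {g : ι → ι'}
    (hg : g.Injective) : μ.map (fun ω i => X (g i) ω) = Measure.pi fun _ => ν := by
  rw [(iIndepFun_iff_map_fun_eq_pi_map fun i => (hmeas (g i)).aemeasurable).1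
    (hindep.precomp hg)]
  simp only [hν]

end IdenticallyDistributed

theorem stmt11_general {Ω : Type*} [MeasurableSpace Ω] (μ : Measure Ω) [IsProbabilityMeasure μ]
    (p : ℝ)
    (X : ℕ → Ω → ℤ) (hmeas : ∀ i, Measurable (X i))
    (hindep : iIndepFun X μ)
    (hval : ∀ i ω, X i ω = 1 ∨ X i ω = -1)
    (hdist : ∀ i, μ {ω | X i ω = 1} = ENNReal.ofReal p)
    (n : ℕ) :
    (1 / (n:ℝ)) * (μ {ω | ∑ i ∈ Finset.range n, X i ω < 0}).toReal
      ≤ (μ {ω | ∀ k, 1 ≤ k → k ≤ n → ∑ i ∈ Finset.range k, X i ω < 0}).toReal := by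
  rcases Nat.eq_zero_or_pos n with rfl | hn
  · simp
  have : NeZero n := ⟨hn.ne'⟩
  let rotated (r : Fin n) (ω : Ω) : Fin n → ℤ := fun i => X ((r + i : Fin n) : ℕ) ω
  have hlaw (r : Fin n) : μ {ω | PrefixSumsNeg (rotated r ω)}
      = Measure.pi (fun _ => μ.map (X 0)) {v : Fin n → ℤ | PrefixSumsNeg v} := by
    rw [← hindep.map_fun_comp_eq_pi hmeas
      (fun i => map_eq_map_of_forall_eq_one_or_neg_one (hmeas i) (hmeas 0) (hval i) (hval 0)
        ((hdist i).trans (hdist 0).symm))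
      (Fin.val_injective.comp (add_right_injective r)),
      Measure.map_apply (measurable_pi_lambda _ fun i => hmeas _)
        (Set.to_countable _).measurableSet]
    rfl
  have hcover : {ω | ∑ i ∈ range n, X i ω < 0} ⊆ ⋃ r, {ω | PrefixSumsNeg (rotated r ω)} :=
    fun ω hω => Set.mem_iUnion.2 <| exists_prefixSumsNeg_rotation_of_sum_neg <| by
      rwa [Fin.sum_univ_eq_sum_range (fun i => X i ω)]
  have htarget : {ω | ∀ k, 1 ≤ k → k ≤ n → ∑ i ∈ range k, X i ω < 0}
      = {ω | PrefixSumsNeg (rotated 0 ω)} := by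
    ext ω
    refine forall₃_congr fun k _ hkn => ?_
    rw [show ∑ i ∈ range k, rotated 0 ω i = ∑ i ∈ range k, X i ω from
      sum_congr rfl fun i hi => by
        simp [rotated, Fin.val_natCast, Nat.mod_eq_of_lt ((mem_range.1 hi).trans_le hkn)]]
  have hbound : μ {ω | ∑ i ∈ range n, X i ω < 0} ≤ n * μ {ω | PrefixSumsNeg (rotated 0 ω)} :=
    calc _ ≤ ∑ r, μ {ω | PrefixSumsNeg (rotated r ω)} := (measure_mono hcover).trans
            (measure_iUnion_fintype_le _ _)
      _ = n * μ {ω | PrefixSumsNeg (rotated 0 ω)} := by simp [hlaw]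
  rw [htarget, one_div, inv_mul_le_iff₀ (by exact_mod_cast hn)]
  simpa [ENNReal.toReal_mul] using ENNReal.toReal_mono (by finiteness) hbound

/-- A consequence of Bertrand's Ballot Theorem. -/
theorem stmt11 {Ω : Type*} [MeasurableSpace Ω] (μ : Measure Ω) [IsProbabilityMeasure μ]
    (p : ℝ) (hp0 : 0 < p) (hp1 : p < 1)
    (X : ℕ → Ω → ℤ) (hmeas : ∀ i, Measurable (X i))
    (hindep : iIndepFun X μ)
    (hval : ∀ i ω, X i ω = 1 ∨ X i ω = -1)
    (hdist : ∀ i, μ {ω | X i ω = 1} = ENNReal.ofReal p)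
    (n : ℕ) (hn : 1 ≤ n) :
    (1 / (n:ℝ)) * (μ {ω | ∑ i ∈ Finset.range n, X i ω < 0}).toReal
      ≤ (μ {ω | ∀ k, 1 ≤ k → k ≤ n → ∑ i ∈ Finset.range k, X i ω < 0}).toReal :=
  stmt11_general μ p X hmeas hindep hval hdist n
end

section
/- For 1/2 < p < 1, let a_p = D_KL(1/2 || p), t* = a_p / log(p/(1-p)), and p* = (1+t*)/2. Then 1/2 < p* < p, and consequently 2 D_KL(1/2 || p) > D_KL(p* || p) + D_KL(1/2 || p). -/
set_option maxHeartbeats 1000000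

lemma klBer_hasDeriv (p x : ℝ) (hx0 : 0 < x) (hx1 : x < 1) (hp0 : 0 < p) (hp1 : p < 1) :
    HasDerivAt (fun y => klBer y p)
      (Real.log x - Real.log p - Real.log (1-x) + Real.log (1-p)) x := by
  have h1 : HasDerivAt (fun y : ℝ => y * Real.log y) (Real.log x + 1) x :=
    Real.hasDerivAt_mul_log (ne_of_gt hx0)
  have h2 : HasDerivAt (fun y : ℝ => (1-y)) (-1) x := by
    simpa using (hasDerivAt_id x).const_sub 1
  have h3 : HasDerivAt (fun y : ℝ => (1-y) * Real.log (1-y)) ((Real.log (1-x) + 1) * (-1)) x :=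
    (Real.hasDerivAt_mul_log (by linarith : (1:ℝ) - x ≠ 0)).comp x h2
  have h4 : HasDerivAt (fun y : ℝ => y * Real.log y - y * Real.log p
      + ((1-y) * Real.log (1-y) - (1-y) * Real.log (1-p)))
      ((Real.log x + 1) - Real.log p + ((Real.log (1-x) + 1) * (-1) - (-1) * Real.log (1-p))) x := by
    have h := (h1.sub ((hasDerivAt_id x).mul_const (Real.log p))).add
      (h3.sub (h2.mul_const (Real.log (1-p))))
    simp only [id_eq, one_mul] at h
    exact h
  have heq : (fun y => klBer y p) =ᶠ[nhds x]
      (fun y : ℝ => y * Real.log y - y * Real.log p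
        + ((1-y) * Real.log (1-y) - (1-y) * Real.log (1-p))) := by
    filter_upwards [Ioo_mem_nhds hx0 hx1] with y hy
    unfold klBer
    rw [Real.log_div (ne_of_gt hy.1) (ne_of_gt hp0),
        Real.log_div (by linarith [hy.2] : (1:ℝ) - y ≠ 0) (by linarith : (1:ℝ) - p ≠ 0)]
    ring
  have h5 : Real.log x - Real.log p - Real.log (1-x) + Real.log (1-p)
      = (Real.log x + 1) - Real.log p + ((Real.log (1-x) + 1) * (-1) - (-1) * Real.log (1-p)) := by
    ring
  rw [h5]
  exact h4.congr_of_eventuallyEq heq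

theorem stmt17 (p a ts ps : ℝ) (hp : 1/2 < p) (hp1 : p < 1)
    (ha : a = klBer (1/2) p)
    (hts : ts = a / Real.log (p / (1 - p)))
    (hps : ps = (1 + ts)/2) :
    1/2 < ps ∧ ps < p ∧ klBer ps p + klBer (1/2) p < 2 * klBer (1/2) p := by
  have hp0 : 0 < p := by linarith
  have hq0 : 0 < 1 - p := by linarith
  have hL : Real.log (1-p) < Real.log p := Real.log_lt_log hq0 (by linarith)
  set lp := Real.log p with hlp
  set lq := Real.log (1-p) with hlq
  -- value of a
  have hl2 : Real.log (1/2 : ℝ) = -Real.log 2 := by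
    rw [show (1:ℝ)/2 = 2⁻¹ by norm_num, Real.log_inv]
  have ha2 : a = -Real.log 2 - (1/2)*(lp + lq) := by
    rw [ha]; unfold klBer
    rw [show (1:ℝ) - 1/2 = 1/2 by norm_num,
        Real.log_div (by norm_num) (ne_of_gt hp0),
        Real.log_div (by norm_num) (ne_of_gt hq0), hl2]
    ring
  -- a > 0
  have hprod : Real.log (p * (1-p)) = lp + lq := Real.log_mul (ne_of_gt hp0) (ne_of_gt hq0)
  have hpq_lt : p * (1-p) < 1/4 := by nlinarith
  have hlog4 : Real.log (1/4 : ℝ) = -(2 * Real.log 2) := by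
    rw [show (1:ℝ)/4 = (2^2 : ℝ)⁻¹ by norm_num, Real.log_inv, Real.log_pow]
    push_cast; ring
  have ha_pos : 0 < a := by
    have := Real.log_lt_log (by positivity) hpq_lt
    rw [hprod, hlog4] at this
    rw [ha2]; linarith
  -- a < (p - 1/2) * (lp - lq)
  have h1 : Real.log (1/(2*p)) < 1/(2*p) - 1 :=
    Real.log_lt_sub_one_of_pos (by positivity) (by
      intro h
      have : 2 * p = 1 := by field_simp at h; linarith
      linarith)
  have h2 : Real.log (1/(2*(1-p))) ≤ 1/(2*(1-p)) - 1 :=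
    Real.log_le_sub_one_of_pos (by positivity)
  have e1 : Real.log (1/(2*p)) = -(Real.log 2 + lp) := by
    rw [show (1:ℝ)/(2*p) = (2*p)⁻¹ by ring, Real.log_inv,
        Real.log_mul (by norm_num) (ne_of_gt hp0)]
  have e2 : Real.log (1/(2*(1-p))) = -(Real.log 2 + lq) := by
    rw [show (1:ℝ)/(2*(1-p)) = (2*(1-p))⁻¹ by ring, Real.log_inv,
        Real.log_mul (by norm_num) (ne_of_gt hq0)]
  have v1 : p * (1/(2*p)) = 1/2 := by field_simp
  have v2 : (1-p) * (1/(2*(1-p))) = 1/2 := by field_simp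
  have hb1 : p * Real.log (1/(2*p)) < 1/2 - p := by nlinarith
  have hb2 : (1-p) * Real.log (1/(2*(1-p))) ≤ 1/2 - (1-p) := by nlinarith
  have ha_lt : a < (p - 1/2) * (lp - lq) := by
    rw [e1] at hb1; rw [e2] at hb2
    nlinarith [ha2]
  -- bounds on ts and ps
  have hLpq : Real.log (p / (1-p)) = lp - lq := Real.log_div (ne_of_gt hp0) (ne_of_gt hq0)
  have hLpos : 0 < lp - lq := by linarith
  have hts_pos : 0 < ts := by rw [hts, hLpq]; positivity
  have hts_lt : ts < p - 1/2 := by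
    rw [hts, hLpq, div_lt_iff₀ hLpos]; linarith
  have hps1 : 1/2 < ps := by rw [hps]; linarith
  have hps2 : ps < p := by rw [hps]; linarith
  refine ⟨hps1, hps2, ?_⟩
  -- monotonicity
  have hanti : StrictAntiOn (fun y => klBer y p) (Set.Icc (1/2 : ℝ) p) := by
    apply strictAntiOn_of_deriv_neg (convex_Icc _ _)
    · intro x hx
      exact ((klBer_hasDeriv p x (by linarith [hx.1]) (by linarith [hx.2]) hp0 hp1).continuousAt).continuousWithinAt
    · intro x hx
      rw [interior_Icc] at hx
      have hx0 : 0 < x := by linarith [hx.1]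
      have hx1 : x < 1 := by linarith [hx.2]
      rw [(klBer_hasDeriv p x hx0 hx1 hp0 hp1).deriv]
      have hlt : Real.log (x * (1-p)) < Real.log (p * (1-x)) :=
        Real.log_lt_log (by positivity) (by nlinarith [hx.2])
      rw [Real.log_mul (ne_of_gt hx0) (ne_of_gt hq0),
          Real.log_mul (ne_of_gt hp0) (by linarith : (1:ℝ) - x ≠ 0)] at hlt
      linarith
  have : klBer ps p < klBer (1/2) p := by
    have := hanti (Set.mem_Icc.2 ⟨le_refl _, le_of_lt hp⟩)
      (Set.mem_Icc.2 ⟨le_of_lt hps1, le_of_lt hps2⟩) hps1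
    simpa using this
  linarith
end

section
/- For 1/2 < p < 1, let t̂ ∈ (0, 2p-1) satisfy t̂ log(p/(1-p)) = D_KL((1+t̂)/2 || p), and set p̂ = (1+t̂)/2, q̂ = 1 - p̂. Then the groupthink rate g_p = D_KL(q̂ || p) satisfies a_p < g_p < b_p, where a_p = D_KL(1/2 || p) and b_p = D_KL(q* || p) with q* = 1 - (1 + a_p/log(p/(1-p)))/2. -/
/-!
Everything follows from the fact that `x ↦ D_KL(x || p)` is strictly decreasing on `[0, p]`:
it is minus the binary entropy plus an affine function, with derivative
`log (x / (1 - x)) - log (p / (1 - p)) < 0` there. Since `q̂ < 1/2 < p`, this gives `a_p < g_p`.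
Since `1/2 < p̂ < p`, the defining equation of `t̂` gives `t̂ log (p/(1-p)) = D_KL(p̂ || p) < a_p`,
i.e. `t̂ < a_p / log (p/(1-p))`, which says `q* < q̂`; as `a_p < log (p/(1-p))`,
also `0 < q*`, so `g_p < b_p`.
-/

open Real Set

lemma klBer_eq_neg_binEntropy_add {p : ℝ} (hp0 : p ≠ 0) (hp1 : p ≠ 1) (x : ℝ) :
    klBer x p = -binEntropy x - x * log p - (1 - x) * log (1 - p) := by
  have hx : x * log (x / p) = x * log x - x * log p := by
    rcases eq_or_ne x 0 with rfl | hx0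
    · simp
    · rw [log_div hx0 hp0]; ring
  have hy : (1 - x) * log ((1 - x) / (1 - p)) = (1 - x) * log (1 - x) - (1 - x) * log (1 - p) := by
    rcases eq_or_ne (1 - x) 0 with h | hx1
    · simp [h]
    · rw [log_div hx1 (sub_ne_zero.mpr hp1.symm)]; ring
  rw [klBer, hx, hy, binEntropy, log_inv, log_inv]
  ring

lemma klBer_strictAntiOn {p : ℝ} (hp0 : 0 < p) (hp1 : p < 1) :
    StrictAntiOn (fun x => klBer x p) (Icc 0 p) := by
  simp_rw [klBer_eq_neg_binEntropy_add hp0.ne' hp1.ne]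
  apply strictAntiOn_of_deriv_neg (convex_Icc 0 p) (by fun_prop)
  intro x hx
  rw [interior_Icc] at hx
  obtain ⟨hx0, hxp⟩ := hx
  have hderiv : HasDerivAt (fun x => -binEntropy x - x * log p - (1 - x) * log (1 - p))
      (-(log (1 - x) - log x) - log p + log (1 - p)) x := by
    refine (((hasDerivAt_binEntropy hx0.ne' (by linarith)).neg.sub
      ((hasDerivAt_id x).mul_const (log p))).sub
      (((hasDerivAt_id x).const_sub 1).mul_const (log (1 - p)))).congr_deriv ?_
    ring
  rw [hderiv.deriv]
  have hlogx : log x < log p := log_lt_log hx0 hxp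
  have hlog1x : log (1 - p) < log (1 - x) := log_lt_log (by linarith) (by linarith)
  linarith

lemma klBer_half_lt_log_odds {p : ℝ} (hp : 1 / 2 < p) (hp1 : p < 1) :
    klBer (1 / 2) p < log (p / (1 - p)) := by
  have hp0 : 0 < p := by linarith
  have h1p : 0 < 1 - p := by linarith
  have hlp : log (1 / 2) < log p := log_lt_log (by norm_num) hp
  have hl1p : log (1 - p) < log (1 / 2) := log_lt_log h1p (by linarith)
  rw [klBer, show (1 : ℝ) - 1 / 2 = 1 / 2 by norm_num, log_div (by norm_num) hp0.ne',
    log_div (by norm_num) h1p.ne', log_div hp0.ne' h1p.ne']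
  linarith

theorem stmt18 (p th ph qh a b g qs : ℝ) (hp : 1/2 < p) (hp1 : p < 1)
    (hth : th ∈ Set.Ioo 0 (2*p - 1))
    (htheq : th * Real.log (p / (1 - p)) = klBer ((1 + th)/2) p)
    (hph : ph = (1 + th)/2) (hqh : qh = 1 - ph)
    (hg : g = klBer qh p)
    (ha : a = klBer (1/2) p)
    (hqs : qs = 1 - (1 + a / Real.log (p / (1 - p)))/2)
    (hb : b = klBer qs p) :
    a < g ∧ g < b := by
  obtain ⟨hth0, hth1⟩ := hth
  have hanti := klBer_strictAntiOn (by linarith : 0 < p) hp1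
  set L := log (p / (1 - p))
  have hL : 0 < L := log_pos ((one_lt_div (by linarith)).mpr (by linarith))
  have hqh' : qh = (1 - th) / 2 := by rw [hqh, hph]; ring
  have hqs' : qs = (1 - a / L) / 2 := by rw [hqs]; ring
  have hthL : th < a / L := by
    rw [lt_div_iff₀ hL, htheq, ha]
    exact hanti ⟨by norm_num, by linarith⟩ ⟨by linarith, by linarith⟩ (by linarith)
  have haL : a / L < 1 := (div_lt_one hL).mpr (ha ▸ klBer_half_lt_log_odds hp hp1)
  refine ⟨?_, ?_⟩
  · rw [ha, hg]
    exact hanti ⟨by rw [hqh']; linarith, by rw [hqh']; linarith⟩ ⟨by norm_num, hp.le⟩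
      (by rw [hqh']; linarith)
  · rw [hg, hb]
    exact hanti ⟨by rw [hqs']; linarith, by rw [hqs']; linarith⟩
      ⟨by rw [hqh']; linarith, by rw [hqh']; linarith⟩ (by rw [hqs', hqh']; linarith)
end
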